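/- arXiv:2001.00887 — 5 statements merged into one kernel-verified Lean document; each statement's English description precedes it below -/
import Mathlib

section
/- For s = sin(θ/2) with θ ∈ [-π/2, π/2], the quantity s² lies in the interval [0, 1/2], and consequently for any p ∈ [0,1], the maximum over θ ∈ [-π/2, π/2] of |1 - 4p·((s² - 1/2)² + 1/4)| equals max(|1 - 2p|, |1 - p|). -/
open Real Set

theorem stmt0 :
    (∀ θ ∈ Icc (-(π/2)) (π/2), Real.sin (θ/2) ^ 2 ∈ Icc (0:ℝ) (1/2)) ∧
    (∀ p ∈ Icc (0:ℝ) 1,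
      IsGreatest
        ((fun θ => |1 - 4*p*((Real.sin (θ/2) ^ 2 - 1/2)^2 + 1/4)|) '' Icc (-(π/2)) (π/2))
        (max |1 - 2*p| |1 - p|)) := by
  have key : ∀ θ ∈ Icc (-(π/2)) (π/2), Real.sin (θ/2) ^ 2 ∈ Icc (0:ℝ) (1/2) := by
    intro θ hθ
    have hc : 0 ≤ Real.cos θ := Real.cos_nonneg_of_mem_Icc hθ
    have h2 : (2:ℝ) * (θ/2) = θ := by ring
    have hcs := Real.cos_sq (θ/2)
    rw [h2] at hcs
    refine ⟨sq_nonneg _, ?_⟩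
    nlinarith [Real.sin_sq_add_cos_sq (θ/2)]
  refine ⟨key, ?_⟩
  intro p hp
  obtain ⟨hp0, hp1⟩ := hp
  constructor
  · -- membership
    rcases le_total |1 - 2*p| |1 - p| with h | h
    · refine ⟨π/2, ⟨by linarith [Real.pi_pos], le_refl _⟩, ?_⟩
      have h4 : Real.sin (π/2/2) ^ 2 = 1/2 := by
        have : π/2/2 = π/4 := by ring
        rw [this, Real.sin_pi_div_four]
        rw [div_pow, sq_sqrt (by norm_num : (2:ℝ) ≥ 0)]
        norm_num
      simp only [h4, max_eq_right h]
      norm_num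
      ring_nf
    · refine ⟨0, ⟨by linarith [Real.pi_pos], by linarith [Real.pi_pos]⟩, ?_⟩
      simp only [max_eq_left h]
      norm_num
      ring_nf
  · -- upper bound
    rintro x ⟨θ, hθ, rfl⟩
    obtain ⟨ht0, ht1⟩ := key θ hθ
    set t := Real.sin (θ/2) ^ 2 with htdef
    have hq0 : 0 ≤ (t - 1/2)^2 := sq_nonneg _
    have hq1 : (t - 1/2)^2 ≤ 1/4 := by nlinarith
    have hlow : 1 - 2*p ≤ 1 - 4*p*((t - 1/2)^2 + 1/4) := by nlinarith
    have hhigh : 1 - 4*p*((t - 1/2)^2 + 1/4) ≤ 1 - p := by nlinarith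
    rw [abs_le]
    constructor
    · calc -(max |1 - 2*p| |1 - p|) ≤ -|1 - 2*p| := neg_le_neg (le_max_left _ _)
        _ ≤ 1 - 2*p := neg_abs_le _
        _ ≤ _ := hlow
    · calc 1 - 4*p*((t - 1/2)^2 + 1/4) ≤ 1 - p := hhigh
        _ ≤ |1 - p| := le_abs_self _
        _ ≤ _ := le_max_right _ _
end

section
/- The minimax value min over p ∈ [0,1] of max over θ ∈ [-π/2, π/2] of |1 - 4p·((sin²(θ/2) - 1/2)² + 1/4)| equals 1/3, and this minimum is attained if and only if p = 2/3. -/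
open Real Set

lemma sin_sq_mem' (θ : ℝ) (hθ : θ ∈ Icc (-(π/2)) (π/2)) :
    Real.sin (θ/2) ^ 2 ∈ Icc (0:ℝ) (1/2) := by
  have h : Real.sin (θ/2) ^ 2 = 1/2 - Real.cos (2*(θ/2)) / 2 := Real.sin_sq_eq_half_sub _
  rw [show 2*(θ/2) = θ by ring] at h
  have hc : 0 ≤ Real.cos θ := Real.cos_nonneg_of_mem_Icc hθ
  have hc1 : Real.cos θ ≤ 1 := Real.cos_le_one θ
  constructor
  · positivity
  · nlinarith

lemma mem_val1 (p : ℝ) : |1 - p| ∈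
    ((fun θ => |1 - 4*p*((Real.sin (θ/2) ^ 2 - 1/2)^2 + 1/4)|) '' Icc (-(π/2)) (π/2)) := by
  have hpi := Real.pi_pos
  refine ⟨π/2, ⟨by linarith, le_refl _⟩, ?_⟩
  have h1 : Real.sin (π/2/2) = Real.sqrt 2 / 2 := by
    rw [show π/2/2 = π/4 by ring]; exact Real.sin_pi_div_four
  have h2 : (Real.sqrt 2 / 2)^2 = 1/2 := by
    rw [div_pow, Real.sq_sqrt (by norm_num : (0:ℝ) ≤ 2)]; norm_num
  simp only [h1, h2]
  congr 1; ring

lemma mem_val2 (p : ℝ) : |1 - 2*p| ∈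
    ((fun θ => |1 - 4*p*((Real.sin (θ/2) ^ 2 - 1/2)^2 + 1/4)|) '' Icc (-(π/2)) (π/2)) := by
  have hpi := Real.pi_pos
  refine ⟨0, ⟨by linarith, by linarith⟩, ?_⟩
  simp only [zero_div, Real.sin_zero]
  congr 1; ring

lemma bdd' (p : ℝ) (hp : p ∈ Icc (0:ℝ) 1) : BddAbove
    ((fun θ => |1 - 4*p*((Real.sin (θ/2) ^ 2 - 1/2)^2 + 1/4)|) '' Icc (-(π/2)) (π/2)) := by
  refine ⟨1, ?_⟩
  rintro x ⟨θ, hθ, rfl⟩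
  obtain ⟨ht0, ht1⟩ := sin_sq_mem' θ hθ
  obtain ⟨hp0, hp1⟩ := hp
  rw [abs_le]
  constructor <;> nlinarith [sq_nonneg (Real.sin (θ/2)^2 - 1/2), sq_nonneg (Real.sin (θ/2)^2)]

theorem stmt1 :
    (∀ p ∈ Icc (0:ℝ) 1,
      (1:ℝ)/3 ≤ sSup ((fun θ => |1 - 4*p*((Real.sin (θ/2) ^ 2 - 1/2)^2 + 1/4)|) ''
        Icc (-(π/2)) (π/2))) ∧
    (∀ p ∈ Icc (0:ℝ) 1,
      sSup ((fun θ => |1 - 4*p*((Real.sin (θ/2) ^ 2 - 1/2)^2 + 1/4)|) ''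
        Icc (-(π/2)) (π/2)) = 1/3 ↔ p = 2/3) := by
  constructor
  · intro p hp
    have h1 := le_csSup (bdd' p hp) (mem_val1 p)
    have h2 := le_csSup (bdd' p hp) (mem_val2 p)
    rcases abs_cases (1 - p) with ⟨e1, _⟩ | ⟨e1, _⟩ <;>
      rcases abs_cases (1 - 2*p) with ⟨e2, _⟩ | ⟨e2, _⟩ <;> linarith
  · intro p hp
    constructor
    · intro h
      have h1 := le_csSup (bdd' p hp) (mem_val1 p)
      have h2 := le_csSup (bdd' p hp) (mem_val2 p)
      rw [h] at h1 h2
      rw [abs_le] at h1 h2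
      linarith [h1.1, h1.2, h2.1, h2.2]
    · rintro rfl
      apply le_antisymm
      · apply csSup_le ⟨_, mem_val1 (2/3)⟩
        rintro x ⟨θ, hθ, rfl⟩
        obtain ⟨ht0, ht1⟩ := sin_sq_mem' θ hθ
        rw [abs_le]
        constructor <;> nlinarith [sq_nonneg (Real.sin (θ/2)^2 - 1/2), sq_nonneg (Real.sin (θ/2)^2)]
      · have h1 := le_csSup (bdd' (2/3) (by norm_num)) (mem_val1 (2/3))
        have : |1 - (2:ℝ)/3| = 1/3 := by norm_num
        linarith [this ▸ h1]
end

section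
/- The minimum over (p₁, p₂) ∈ ℝ≥0 × ℝ≥0 of the maximum over θ ∈ [-π/2, π/2] of |(1 - 2p₁s²)(1 - 2p₂s²)s² + (1 - 2p₁c²)(1 - 2p₂c²)c²|, with s = sin(θ/2) and c = cos(θ/2), equals 0, and the minimum is attained if and only if (p₁, p₂) ∈ {(1, 1/2), (1/2, 1)}. -/
open Real Set

private lemma bddstmt4 (p₁ p₂ : ℝ) : BddAbove ((fun θ =>
        |(1 - 2*p₁*Real.sin (θ/2)^2) * (1 - 2*p₂*Real.sin (θ/2)^2) * Real.sin (θ/2)^2 +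
         (1 - 2*p₁*Real.cos (θ/2)^2) * (1 - 2*p₂*Real.cos (θ/2)^2) * Real.cos (θ/2)^2|) ''
        Icc (-(π/2)) (π/2)) :=
  (isCompact_Icc.image_of_continuousOn (by fun_prop)).bddAbove

theorem stmt4 :
    (∀ p₁ p₂ : ℝ, 0 ≤ p₁ → 0 ≤ p₂ →
      (0:ℝ) ≤ sSup ((fun θ =>
        |(1 - 2*p₁*Real.sin (θ/2)^2) * (1 - 2*p₂*Real.sin (θ/2)^2) * Real.sin (θ/2)^2 +
         (1 - 2*p₁*Real.cos (θ/2)^2) * (1 - 2*p₂*Real.cos (θ/2)^2) * Real.cos (θ/2)^2|) ''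
        Icc (-(π/2)) (π/2))) ∧
    (∀ p₁ p₂ : ℝ, 0 ≤ p₁ → 0 ≤ p₂ →
      (sSup ((fun θ =>
        |(1 - 2*p₁*Real.sin (θ/2)^2) * (1 - 2*p₂*Real.sin (θ/2)^2) * Real.sin (θ/2)^2 +
         (1 - 2*p₁*Real.cos (θ/2)^2) * (1 - 2*p₂*Real.cos (θ/2)^2) * Real.cos (θ/2)^2|) ''
        Icc (-(π/2)) (π/2)) = 0 ↔
        ((p₁, p₂) = ((1:ℝ), (1/2:ℝ)) ∨ (p₁, p₂) = ((1/2:ℝ), (1:ℝ))))) := by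
  have hπ := Real.pi_pos
  have h0mem : (0:ℝ) ∈ Icc (-(π/2)) (π/2) := ⟨by linarith, by linarith⟩
  constructor
  · intro p₁ p₂ _ _
    exact le_trans (abs_nonneg _) (le_csSup (bddstmt4 p₁ p₂) (Set.mem_image_of_mem _ h0mem))
  · intro p₁ p₂ _ _
    constructor
    · intro h
      have key : ∀ θ ∈ Icc (-(π/2)) (π/2),
          |(1 - 2*p₁*Real.sin (θ/2)^2) * (1 - 2*p₂*Real.sin (θ/2)^2) * Real.sin (θ/2)^2 +
           (1 - 2*p₁*Real.cos (θ/2)^2) * (1 - 2*p₂*Real.cos (θ/2)^2) * Real.cos (θ/2)^2| = 0 := by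
        intro θ hθ
        have hle := le_csSup (bddstmt4 p₁ p₂) (Set.mem_image_of_mem _ hθ)
        rw [h] at hle
        exact le_antisymm hle (abs_nonneg _)
      have e0 := key 0 h0mem
      have e1 := key (π/2) ⟨by linarith, le_refl _⟩
      rw [abs_eq_zero] at e0 e1
      have hd : (π/2)/2 = π/4 := by ring
      rw [hd, Real.sin_pi_div_four, Real.cos_pi_div_four] at e1
      have hsq : (Real.sqrt 2 / 2)^2 = 1/2 := by
        rw [div_pow, Real.sq_sqrt (by norm_num : (0:ℝ) ≤ 2)]; norm_num
      rw [hsq] at e1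
      norm_num at e0 e1
      rcases e0 with hA | hA <;> rcases e1 with hB | hB
      · exfalso; linarith
      · right; rw [Prod.mk.injEq]; constructor <;> linarith
      · left; rw [Prod.mk.injEq]; constructor <;> linarith
      · exfalso; linarith
    · intro h
      have hval : ∀ θ : ℝ,
          |(1 - 2*p₁*Real.sin (θ/2)^2) * (1 - 2*p₂*Real.sin (θ/2)^2) * Real.sin (θ/2)^2 +
           (1 - 2*p₁*Real.cos (θ/2)^2) * (1 - 2*p₂*Real.cos (θ/2)^2) * Real.cos (θ/2)^2| = 0 := by
        intro θ
        rw [abs_eq_zero]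
        have hc : Real.cos (θ/2)^2 = 1 - Real.sin (θ/2)^2 := by
          linarith [Real.sin_sq_add_cos_sq (θ/2)]
        rcases h with h | h <;> rw [Prod.mk.injEq] at h <;>
          obtain ⟨rfl, rfl⟩ := h <;> rw [hc] <;> ring
      have himg : ((fun θ =>
        |(1 - 2*p₁*Real.sin (θ/2)^2) * (1 - 2*p₂*Real.sin (θ/2)^2) * Real.sin (θ/2)^2 +
         (1 - 2*p₁*Real.cos (θ/2)^2) * (1 - 2*p₂*Real.cos (θ/2)^2) * Real.cos (θ/2)^2|) ''
        Icc (-(π/2)) (π/2)) = {0} := by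
        apply Subset.antisymm
        · rintro x ⟨θ, hθ, rfl⟩
          exact hval θ
        · rintro x hx
          rw [mem_singleton_iff] at hx
          subst hx
          exact ⟨0, h0mem, hval 0⟩
      rw [himg, csSup_singleton]
end

section
/- For any p₁, p₂ ≥ 0 with (p₁, p₂) ∉ {(1, 1/2), (1/2, 1)}, there exists θ ∈ [-π/2, π/2] such that (1-2p₁s²)(1-2p₂s²)s² + (1-2p₁c²)(1-2p₂c²)c² ≠ 0, where s = sin(θ/2) and c = cos(θ/2). -/
open Real Set

theorem stmt18 (p₁ p₂ : ℝ) (hp₁ : 0 ≤ p₁) (hp₂ : 0 ≤ p₂)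
    (hne : ¬((p₁, p₂) = ((1:ℝ), (1/2:ℝ)) ∨ (p₁, p₂) = ((1/2:ℝ), (1:ℝ)))) :
    ∃ θ ∈ Icc (-(π/2)) (π/2),
      (1 - 2*p₁*Real.sin (θ/2)^2) * (1 - 2*p₂*Real.sin (θ/2)^2) * Real.sin (θ/2)^2 +
      (1 - 2*p₁*Real.cos (θ/2)^2) * (1 - 2*p₂*Real.cos (θ/2)^2) * Real.cos (θ/2)^2 ≠ 0 := by
  have hπ := Real.pi_pos
  by_cases h0 : (1 - 2*p₁) * (1 - 2*p₂) ≠ 0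
  · refine ⟨0, ⟨by linarith, by linarith⟩, ?_⟩
    norm_num
    exact mul_ne_zero_iff.mp h0
  · push_neg at h0
    refine ⟨π/2, ⟨by linarith, le_refl _⟩, ?_⟩
    have h4 : π / 2 / 2 = π / 4 := by ring
    rw [h4, Real.sin_pi_div_four, Real.cos_pi_div_four]
    have h2 : (Real.sqrt 2 / 2) ^ 2 = 1/2 := by
      rw [div_pow, Real.sq_sqrt (by norm_num : (2:ℝ) ≥ 0)]; norm_num
    rw [h2]
    have key : (1 - p₁) * (1 - p₂) ≠ 0 := by
      rcases mul_eq_zero.mp h0 with h | h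
      · intro hc
        rcases mul_eq_zero.mp hc with h' | h'
        · have : p₁ = 1 := by linarith
          have : p₁ = 1/2 := by linarith
          linarith
        · exact hne (Or.inr (by simp [Prod.ext_iff]; constructor <;> linarith))
      · intro hc
        rcases mul_eq_zero.mp hc with h' | h'
        · exact hne (Or.inl (by simp [Prod.ext_iff]; constructor <;> linarith))
        · have : p₂ = 1 := by linarith
          have : p₂ = 1/2 := by linarith
          linarith
    intro hc
    apply key
    nlinarith [hc]
end

section
/- The function t ↦ (1-2p₁t)(1-2p₂t)t + (1-2p₁(1-t))(1-2p₂(1-t))(1-t), for t ∈ [0, 1/2], is the zero polynomial in t if and only if {p₁, p₂} = {1, 1/2}. -/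
open Set

theorem stmt19 (p₁ p₂ : ℝ) :
    (∀ t ∈ Icc (0:ℝ) (1/2),
      (1 - 2*p₁*t) * (1 - 2*p₂*t) * t +
      (1 - 2*p₁*(1-t)) * (1 - 2*p₂*(1-t)) * (1-t) = 0) ↔
    ((p₁ = 1 ∧ p₂ = 1/2) ∨ (p₁ = 1/2 ∧ p₂ = 1)) := by
  constructor
  · intro h
    have h0 := h 0 (by norm_num)
    have h1 := h (1/2) (by norm_num)
    have e0 : (1 - 2*p₁) * (1 - 2*p₂) = 0 := by linarith [h0, sq_nonneg p₁]
    have e1 : (1 - p₁) * (1 - p₂) = 0 := by nlinarith [h1]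
    rcases mul_eq_zero.1 e0 with a | a <;> rcases mul_eq_zero.1 e1 with b | b
    · exfalso; linarith
    · right; constructor <;> linarith
    · left; constructor <;> linarith
    · exfalso; linarith
  · rintro (⟨h1, h2⟩ | ⟨h1, h2⟩) <;> subst h1 <;> subst h2 <;> intro t _ <;> ring
end
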